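/- arXiv:0910.5477 — 3 statements merged into one kernel-verified Lean document; each statement's English description precedes it below -/
import Mathlib

section
/- Let λ be a Young diagram and t a formal variable. Then ∏ (1 − t^{m'−m}) = M(1,t) · s_λ(t^{−ρ}), where the product is over all pairs of integers (m, m') with m < m', λ(m + 1/2) = − and λ(m' + 1/2) = + in the Maya-diagram encoding of λ; here M(1,t) = ∏_{k>0} (1−t^k)^{−k} is the MacMahon function and s_λ(t^{−ρ}) = s_λ(t^{1/2}, t^{3/2}, t^{5/2}, …) is the principal specialization of the Schur function. Equivalently, by the hook length formula, s_λ(t^{−ρ}) = t^{|λ|/2} ∏_{□∈λ} (1 − t^{h(□)})^{−1} (up to the standard sign/normalization), and the displayed identity of formal power series holds. -/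
open Finset

namespace Stmt7Aux

/-- Beta numbers (positions of `+` in the Maya diagram). -/
def B (l : YoungDiagram) (r : ℕ) : ℤ := (l.rowLen r : ℤ) - (r + 1)

/-- Complementary numbers (positions of `-`). -/
def C (l : YoungDiagram) (c : ℕ) : ℤ := (c : ℤ) - l.colLen c

lemma B_strictAnti (l : YoungDiagram) : StrictAnti (B l) := by
  apply strictAnti_nat_of_succ_lt
  intro r
  have := l.rowLen_anti r (r + 1) (by omega)
  simp only [B]
  push_cast
  omega

lemma C_strictMono (l : YoungDiagram) : StrictMono (C l) := by
  apply strictMono_nat_of_lt_succ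
  intro c
  have := l.colLen_anti c (c + 1) (by omega)
  simp only [C]
  push_cast
  omega

lemma rowLen_eq_zero_of_ge (l : YoungDiagram) {r : ℕ} (h : l.colLen 0 ≤ r) :
    l.rowLen r = 0 := by
  by_contra hne
  have : (r, 0) ∈ l := YoungDiagram.mem_iff_lt_rowLen.2 (by omega)
  have := YoungDiagram.mem_iff_lt_colLen.1 this
  omega

/-- Low: every sufficiently negative integer is a beta number. -/
lemma mem_B_of_low (l : YoungDiagram) {m : ℤ} (hm : m < -(l.colLen 0 : ℤ)) :
    ∃ r : ℕ, B l r = m := by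
  refine ⟨(-m - 1).toNat, ?_⟩
  have h1 : ((-m - 1).toNat : ℤ) = -m - 1 := Int.toNat_of_nonneg (by omega)
  have h2 : l.colLen 0 ≤ (-m - 1).toNat := by omega
  have h3 := rowLen_eq_zero_of_ge l h2
  simp only [B, h3]
  omega

/-- High: every beta number is `< rowLen 0`. -/
lemma B_lt_high (l : YoungDiagram) (r : ℕ) : B l r < (l.rowLen 0 : ℤ) := by
  have h0 := l.rowLen_anti 0 r (by omega)
  simp only [B]
  omega

/-- Membership in the diagram vs. comparison of `B` and `C`. -/
lemma mem_iff_C_lt_B (l : YoungDiagram) (r c : ℕ) :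
    (r, c) ∈ l ↔ C l c < B l r := by
  constructor
  · intro h
    have h1 := YoungDiagram.mem_iff_lt_rowLen.1 h
    have h2 := YoungDiagram.mem_iff_lt_colLen.1 h
    simp only [B, C]
    omega
  · intro h
    by_contra hne
    have h1 : l.rowLen r ≤ c := by
      by_contra h1
      exact hne (YoungDiagram.mem_iff_lt_rowLen.2 (by omega))
    have h2 : l.colLen c ≤ r := by
      by_contra h2
      exact hne (YoungDiagram.mem_iff_lt_colLen.2 (by omega))
    simp only [B, C] at h
    omega

/-- Disjointness: no integer is both a beta number and a complementary number. -/
lemma B_ne_C (l : YoungDiagram) (r c : ℕ) : B l r ≠ C l c := by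
  by_cases h : (r, c) ∈ l
  · have := (mem_iff_C_lt_B l r c).1 h
    omega
  · have h1 : l.rowLen r ≤ c := by
      by_contra h1
      exact h (YoungDiagram.mem_iff_lt_rowLen.2 (by omega))
    have h2 : l.colLen c ≤ r := by
      by_contra h2
      exact h (YoungDiagram.mem_iff_lt_colLen.2 (by omega))
    simp only [B, C]
    omega

/-- Covering: every integer that is not a beta number is a complementary number. -/
lemma cover (l : YoungDiagram) {m : ℤ} (hm : ¬ ∃ r : ℕ, B l r = m) :
    ∃ c : ℕ, C l c = m := by
  classical
  -- m ≥ -(colLen 0)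
  have hlow : -(l.colLen 0 : ℤ) ≤ m := by
    by_contra h
    exact hm (mem_B_of_low l (by omega))
  -- there exists c with m ≤ C l c
  have hex : ∃ c : ℕ, m ≤ C l c := by
    refine ⟨(m + l.colLen 0 + 1).toNat, ?_⟩
    have h1 : ((m + l.colLen 0 + 1).toNat : ℤ) = m + l.colLen 0 + 1 :=
      Int.toNat_of_nonneg (by omega)
    have h2 := l.colLen_anti 0 (m + l.colLen 0 + 1).toNat (by omega)
    simp only [C]
    omega
  obtain ⟨n, hfound, hmin⟩ : ∃ n : ℕ, m ≤ C l n ∧ ∀ j < n, ¬ m ≤ C l j :=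
    ⟨Nat.find hex, Nat.find_spec hex, fun j hj => Nat.find_min hex hj⟩
  rcases eq_or_lt_of_le hfound with heq | hlt
  · exact ⟨n, heq.symm⟩
  · -- C l n ≥ m + 1; show n ≠ 0 and derive a beta number equal to m: contradiction
    exfalso
    have hc0 : n ≠ 0 := by
      intro h0
      rw [h0] at hlt
      simp only [C] at hlt
      omega
    obtain ⟨c', rfl⟩ : ∃ c', n = c' + 1 := ⟨n - 1, by omega⟩
    have hc' : ¬ m ≤ C l c' := hmin c' (by omega)
    push_neg at hc'
    -- r := c - m - 1
    have hCc : (c' + 1 : ℤ) - l.colLen (c' + 1) ≥ m + 1 := by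
      simpa [C] using hlt
    have hCc' : (c' : ℤ) - l.colLen c' ≤ m - 1 := by
      simp only [C] at hc'
      omega
    set r : ℕ := ((c' + 1 : ℤ) - m - 1).toNat with hr
    have hrZ : (r : ℤ) = (c' + 1 : ℤ) - m - 1 := by
      rw [hr]
      exact Int.toNat_of_nonneg (by omega)
    have hmem : (r, c') ∈ l := by
      apply YoungDiagram.mem_iff_lt_colLen.2
      omega
    have hnmem : (r, c' + 1) ∉ l := by
      intro h
      have := YoungDiagram.mem_iff_lt_colLen.1 h
      push_cast at this
      omega
    have h1 := YoungDiagram.mem_iff_lt_rowLen.1 hmem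
    have h2 : l.rowLen r ≤ c' + 1 := by
      by_contra h2
      exact hnmem (YoungDiagram.mem_iff_lt_rowLen.2 (by omega))
    apply hm
    refine ⟨r, ?_⟩
    simp only [B]
    omega

/-- The abstract counting lemma: if `R` contains everything below `a` and is
bounded above by `b`, then the number of `m ∈ R` with `m + k ∉ R` equals
`k` plus the number of `m ∉ R` with `m + k ∈ R`. -/
lemma count_key (R : Set ℤ) (k : ℕ) (hk : 1 ≤ k) (a b : ℤ)
    (hlow : ∀ m : ℤ, m < a → m ∈ R) (hhigh : ∀ m ∈ R, m < b) :
    {m : ℤ | m ∈ R ∧ m + k ∉ R}.ncard = k + {m : ℤ | m ∉ R ∧ m + k ∈ R}.ncard := by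
  classical
  set L : ℤ := |a| + |b| + k with hL
  have ha1 : a ≤ |a| := le_abs_self a
  have ha2 : -a ≤ |a| := neg_abs_le a |> neg_le.mp
  have hb1 : b ≤ |b| := le_abs_self b
  have hb2 : -b ≤ |b| := neg_abs_le b |> neg_le.mp
  set I : Finset ℤ := Finset.Ico (-L) L with hI
  set A : Finset ℤ := I.filter (fun m => m ∈ R ∧ m + k ∉ R) with hA
  set Bf : Finset ℤ := I.filter (fun m => m ∉ R ∧ m + k ∈ R) with hBf
  set D : Finset ℤ := I.filter (fun m => m ∈ R ∧ m + k ∈ R) with hD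
  -- identify the two sets with the finsets
  have hsetA : {m : ℤ | m ∈ R ∧ m + k ∉ R} = ↑A := by
    ext m
    simp only [hA, Finset.coe_filter, Set.mem_setOf_eq, hI, Finset.mem_Ico]
    constructor
    · rintro ⟨h1, h2⟩
      have hub := hhigh m h1
      have hlb : a ≤ m + k := by
        by_contra h
        exact h2 (hlow _ (by omega))
      exact ⟨⟨by omega, by omega⟩, h1, h2⟩
    · rintro ⟨_, h⟩
      exact h
  have hsetB : {m : ℤ | m ∉ R ∧ m + k ∈ R} = ↑Bf := by
    ext m
    simp only [hBf, Finset.coe_filter, Set.mem_setOf_eq, hI, Finset.mem_Ico]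
    constructor
    · rintro ⟨h1, h2⟩
      have hub := hhigh _ h2
      have hlb : a ≤ m := by
        by_contra h
        exact h1 (hlow _ (by omega))
      exact ⟨⟨by omega, by omega⟩, h1, h2⟩
    · rintro ⟨_, h⟩
      exact h
  rw [hsetA, hsetB, Set.ncard_coe_finset, Set.ncard_coe_finset]
  -- split cards
  have split : ∀ (p q : ℤ → Prop) (_ : DecidablePred p) (_ : DecidablePred q),
      (I.filter (fun m => p m ∧ q m)).card + (I.filter (fun m => p m ∧ ¬ q m)).card
        = (I.filter p).card := by
    intro p q hp hq
    classical
    rw [← Finset.filter_filter, ← Finset.filter_filter,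
      Finset.card_filter_add_card_filter_not]
  have h1 : D.card + A.card = (I.filter (fun m => m ∈ R)).card := by
    have := split (fun m => m ∈ R) (fun m => m + k ∈ R) (by infer_instance) (by infer_instance)
    simpa [hA, hD] using this
  have h2 : D.card + Bf.card = (I.filter (fun m => m + (k : ℤ) ∈ R)).card := by
    have hs := split (fun m => m + (k : ℤ) ∈ R) (fun m => m ∈ R)
      (by infer_instance) (by infer_instance)
    have e1 : I.filter (fun m => m + (k : ℤ) ∈ R ∧ m ∈ R) = D := by
      ext m; simp only [hD, Finset.mem_filter]; tauto
    have e2 : I.filter (fun m => m + (k : ℤ) ∈ R ∧ ¬ m ∈ R) = Bf := by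
      ext m; simp only [hBf, Finset.mem_filter]; tauto
    rw [e1, e2] at hs
    exact hs
  -- reindex c2
  have hreindex : (I.filter (fun m => m + (k : ℤ) ∈ R)).card
      = ((Finset.Ico (-L + k) (L + k)).filter (fun m => m ∈ R)).card := by
    apply Finset.card_bij' (fun m _ => m + (k : ℤ)) (fun m _ => m - (k : ℤ))
    · intro m hm
      simp only [hI, Finset.mem_filter, Finset.mem_Ico] at hm ⊢
      exact ⟨⟨by omega, by omega⟩, hm.2⟩
    · intro m hm
      simp only [hI, Finset.mem_filter, Finset.mem_Ico] at hm ⊢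
      refine ⟨⟨by omega, by omega⟩, by simpa using hm.2⟩
    · intro m _; omega
    · intro m _; omega
  -- compute c1 = k + X
  have hkL : -L + (k : ℤ) ≤ L := by omega
  have hc1 : (I.filter (fun m => m ∈ R)).card
      = k + ((Finset.Ico (-L + k) L).filter (fun m => m ∈ R)).card := by
    rw [hI, ← Finset.Ico_union_Ico_eq_Ico (b := -L + (k : ℤ)) (by omega) hkL,
      Finset.filter_union, Finset.card_union_of_disjoint]
    · congr 1
      rw [Finset.filter_true_of_mem, Int.card_Ico]
      · omega
      · intro m hm
        rw [Finset.mem_Ico] at hm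
        exact hlow m (by omega)
    · exact Finset.disjoint_filter_filter (Finset.Ico_disjoint_Ico_consecutive _ _ _)
  -- compute c2 = X
  have hc2 : ((Finset.Ico (-L + k) (L + k)).filter (fun m => m ∈ R)).card
      = ((Finset.Ico (-L + k) L).filter (fun m => m ∈ R)).card := by
    rw [← Finset.Ico_union_Ico_eq_Ico (b := L) hkL (by omega),
      Finset.filter_union, Finset.card_union_of_disjoint]
    · have : (Finset.Ico L (L + (k:ℤ))).filter (fun m => m ∈ R) = ∅ := by
        rw [Finset.filter_false_of_mem]
        intro m hm
        rw [Finset.mem_Ico] at hm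
        intro hmem
        have := hhigh m hmem
        omega
      rw [this]
      simp
    · exact Finset.disjoint_filter_filter (Finset.Ico_disjoint_Ico_consecutive _ _ _)
  omega

end Stmt7Aux

/- The identity `∏ (1 − t^{m'−m}) = M(1,t) · s_λ(t^{−ρ})` of formal series
(with `M(1,t) = ∏_{k≥1}(1−t^k)^{−k}` and, by the hook length formula,
`s_λ(t^{−ρ}) = t^{|λ|/2} ∏_{□∈λ} (1 − t^{h(□)})^{−1}` up to the standard
sign/normalization) is encoded, via the unique factorization of both sides
into the factors `(1 − t^k)` for `k ≥ 1`, as the statement that for every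
`k ≥ 1` the multiplicity of the factor `(1 − t^k)` on the left — the number
of pairs of integers `(m, m')` with `m < m'`, `m' − m = k`,
`λ(m + 1/2) = −` and `λ(m' + 1/2) = +` in the Maya-diagram encoding of `λ`
(the `−`-positions being `{λ_r − r + 1/2}`) — equals `k` (coming from the
MacMahon function) plus the number of boxes of `λ` of hook length `k`
(coming from the principal specialization of the Schur function). -/
theorem stmt7 (l : YoungDiagram) (k : ℕ) (hk : 1 ≤ k) :
    {mm : ℤ × ℤ | mm.1 < mm.2 ∧ mm.2 - mm.1 = (k : ℤ) ∧
        (∃ r : ℕ, (l.rowLen r : ℤ) - (r + 1) = mm.1) ∧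
        ¬ (∃ r : ℕ, (l.rowLen r : ℤ) - (r + 1) = mm.2)}.ncard
      = k + (l.cells.filter
          (fun c => (l.rowLen c.1 - (c.2 + 1)) + (l.colLen c.2 - (c.1 + 1)) + 1 = k)).card := by
  classical
  set R : Set ℤ := {m : ℤ | ∃ r : ℕ, Stmt7Aux.B l r = m} with hR
  have hRB : ∀ m : ℤ, (∃ r : ℕ, (l.rowLen r : ℤ) - (r + 1) = m) ↔ m ∈ R := by
    intro m
    simp only [hR, Set.mem_setOf_eq, Stmt7Aux.B]
  -- Step A: the pair set is the image of T := {m | m ∈ R ∧ m + k ∉ R}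
  have himg : {mm : ℤ × ℤ | mm.1 < mm.2 ∧ mm.2 - mm.1 = (k : ℤ) ∧
        (∃ r : ℕ, (l.rowLen r : ℤ) - (r + 1) = mm.1) ∧
        ¬ (∃ r : ℕ, (l.rowLen r : ℤ) - (r + 1) = mm.2)}
      = (fun m => (m, m + (k : ℤ))) '' {m : ℤ | m ∈ R ∧ m + k ∉ R} := by
    ext ⟨m1, m2⟩
    simp only [Set.mem_setOf_eq, Set.mem_image, Prod.mk.injEq]
    constructor
    · rintro ⟨h1, h2, h3, h4⟩
      refine ⟨m1, ⟨(hRB m1).1 h3, ?_⟩, rfl, by omega⟩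
      have : m1 + (k : ℤ) = m2 := by omega
      rw [this]
      exact fun h => h4 ((hRB m2).2 h)
    · rintro ⟨m, ⟨hm1, hm2⟩, rfl, rfl⟩
      refine ⟨by omega, by omega, (hRB m).2 hm1, fun h => hm2 ((hRB _).1 h)⟩
  rw [himg, Set.ncard_image_of_injective _ (fun x y h => by
    simpa using congrArg Prod.fst h)]
  -- Step B: counting
  rw [Stmt7Aux.count_key R k hk (-(l.colLen 0 : ℤ)) (l.rowLen 0 : ℤ)
    (fun m hm => Stmt7Aux.mem_B_of_low l hm)
    (fun m hm => by obtain ⟨r, rfl⟩ := hm; exact Stmt7Aux.B_lt_high l r)]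
  congr 1
  -- Step C: {m | m ∉ R ∧ m + k ∈ R} is in bijection with the hook-k cells
  set Fk : Finset (ℕ × ℕ) := l.cells.filter
    (fun c => (l.rowLen c.1 - (c.2 + 1)) + (l.colLen c.2 - (c.1 + 1)) + 1 = k) with hFk
  have hcells : ∀ p : ℕ × ℕ, p ∈ l.cells ↔ p ∈ l := fun p => Iff.rfl
  have hhook : ∀ r c : ℕ, (r, c) ∈ l →
      (((l.rowLen r - (c + 1)) + (l.colLen c - (r + 1)) + 1 = k)
        ↔ Stmt7Aux.B l r - Stmt7Aux.C l c = (k : ℤ)) := by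
    intro r c hp
    have h1 := YoungDiagram.mem_iff_lt_rowLen.1 hp
    have h2 := YoungDiagram.mem_iff_lt_colLen.1 hp
    simp only [Stmt7Aux.B, Stmt7Aux.C]
    omega
  have hset : {m : ℤ | m ∉ R ∧ m + k ∈ R} = ↑(Fk.image (fun p => Stmt7Aux.C l p.2)) := by
    ext m
    simp only [Set.mem_setOf_eq, Finset.coe_image, Set.mem_image, Finset.mem_coe]
    constructor
    · rintro ⟨h1, h2⟩
      obtain ⟨c, hc⟩ := Stmt7Aux.cover l (by simpa [hR] using h1)
      obtain ⟨r, hr⟩ := h2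
      have hmem : (r, c) ∈ l := (Stmt7Aux.mem_iff_C_lt_B l r c).2 (by omega)
      refine ⟨(r, c), ?_, hc⟩
      simp only [hFk, Finset.mem_filter, hcells]
      refine ⟨hmem, ?_⟩
      rw [hhook r c hmem]
      omega
    · rintro ⟨⟨r, c⟩, hp, rfl⟩
      simp only [hFk, Finset.mem_filter, hcells] at hp
      obtain ⟨hcell, hpred⟩ := hp
      rw [hhook r c hcell] at hpred
      constructor
      · rintro ⟨r', hr'⟩
        exact Stmt7Aux.B_ne_C l r' c hr'
      · refine ⟨r, ?_⟩
        show Stmt7Aux.B l r = Stmt7Aux.C l c + (k : ℤ)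
        omega
  rw [hset, Set.ncard_coe_finset]
  apply Finset.card_image_of_injOn
  rintro ⟨r, c⟩ hp ⟨r', c'⟩ hp' heq
  simp only [Finset.mem_coe, hFk, Finset.mem_filter, hcells] at hp hp'
  have hcc : c = c' := Stmt7Aux.C_strictMono l |>.injective heq
  subst hcc
  have h1 := (hhook r c hp.1).1 hp.2
  have h2 := (hhook r' c hp'.1).1 hp'.2
  have : Stmt7Aux.B l r = Stmt7Aux.B l r' := by omega
  have := (Stmt7Aux.B_strictAnti l).injective this
  simp [this]
end

section
/- The vertex operators of the same subscript commute: for any signs ε₁, ε₂ and any p₁, p₂, one has Γ^{ε₁}_+(p₁) Γ^{ε₂}_+(p₂) = Γ^{ε₂}_+(p₂) Γ^{ε₁}_+(p₁) as operators on the Fock space, and similarly Γ^{ε₁}_−(p₁) Γ^{ε₂}_−(p₂) = Γ^{ε₂}_−(p₂) Γ^{ε₁}_−(p₁). -/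
/-- Row interlacing `ν ≻ κ`. -/
def RowInterlace (ν κ : YoungDiagram) : Prop :=
  ∀ r : ℕ, κ.rowLen r ≤ ν.rowLen r ∧ ν.rowLen (r + 1) ≤ κ.rowLen r

/-- Column interlacing `ν ≻' κ` (interlacing of the conjugates). -/
def ColInterlace (ν κ : YoungDiagram) : Prop :=
  ∀ c : ℕ, κ.colLen c ≤ ν.colLen c ∧ ν.colLen (c + 1) ≤ κ.colLen c

/-- `ν ≻^ε κ`. -/
def Intl (ε : Bool) (ν κ : YoungDiagram) : Prop :=
  cond ε (RowInterlace ν κ) (ColInterlace ν κ)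

namespace VC
open Finset

open Finset

lemma rowLen_le_of_le {μ ν : YoungDiagram} (h : μ ≤ ν) (r : ℕ) :
    μ.rowLen r ≤ ν.rowLen r := by
  rcases Nat.eq_zero_or_pos (μ.rowLen r) with h0 | h0
  · omega
  · have hm : (r, μ.rowLen r - 1) ∈ μ := by rw [YoungDiagram.mem_iff_lt_rowLen]; omega
    have hm2 : (r, μ.rowLen r - 1) ∈ ν := YoungDiagram.cells_subset_iff.mpr h hm
    rw [YoungDiagram.mem_iff_lt_rowLen] at hm2
    omega

lemma le_of_rowLen_le {μ ν : YoungDiagram} (h : ∀ r, μ.rowLen r ≤ ν.rowLen r) : μ ≤ ν := by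
  rw [← YoungDiagram.cells_subset_iff]
  intro c hc
  rw [YoungDiagram.mem_cells, YoungDiagram.mem_iff_lt_rowLen] at *
  exact lt_of_lt_of_le hc (h c.1)

lemma le_iff_rowLen {μ ν : YoungDiagram} : μ ≤ ν ↔ ∀ r, μ.rowLen r ≤ ν.rowLen r :=
  ⟨rowLen_le_of_le, le_of_rowLen_le⟩

lemma ext_rowLen {μ ν : YoungDiagram} (h : ∀ r, μ.rowLen r = ν.rowLen r) : μ = ν :=
  le_antisymm (le_of_rowLen_le fun r => (h r).le) (le_of_rowLen_le fun r => (h r).ge)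

lemma colLen_le_of_le {μ ν : YoungDiagram} (h : μ ≤ ν) (c : ℕ) :
    μ.colLen c ≤ ν.colLen c := by
  rcases Nat.eq_zero_or_pos (μ.colLen c) with h0 | h0
  · omega
  · have hm : (μ.colLen c - 1, c) ∈ μ := by rw [YoungDiagram.mem_iff_lt_colLen]; omega
    have hm2 : (μ.colLen c - 1, c) ∈ ν := YoungDiagram.cells_subset_iff.mpr h hm
    rw [YoungDiagram.mem_iff_lt_colLen] at hm2
    omega

lemma rowLen_eq_zero_iff {μ : YoungDiagram} {i : ℕ} : μ.rowLen i = 0 ↔ μ.colLen 0 ≤ i := by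
  have h1 : (i, 0) ∈ μ ↔ 0 < μ.rowLen i := YoungDiagram.mem_iff_lt_rowLen
  have h2 : (i, 0) ∈ μ ↔ i < μ.colLen 0 := YoungDiagram.mem_iff_lt_colLen
  have h3 := h1.symm.trans h2
  omega

lemma card_eq_sum_rowLen (μ : YoungDiagram) {n : ℕ} (h : μ.colLen 0 ≤ n) :
    μ.cells.card = ∑ i ∈ Finset.range n, μ.rowLen i := by
  have hcells : μ.cells = (Finset.range n).biUnion (fun i => μ.row i) := by
    ext c
    simp only [Finset.mem_biUnion, Finset.mem_range]
    constructor
    · intro hc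
      rw [YoungDiagram.mem_cells] at hc
      refine ⟨c.1, ?_, ?_⟩
      · have : c.1 < μ.colLen c.2 := YoungDiagram.mem_iff_lt_colLen.mp (by
          rcases c with ⟨i, j⟩; exact hc)
        have := μ.colLen_anti 0 c.2 (Nat.zero_le _)
        omega
      · rw [YoungDiagram.mem_row_iff]; exact ⟨hc, rfl⟩
    · rintro ⟨i, _, hc⟩
      rw [YoungDiagram.mem_row_iff] at hc
      exact (YoungDiagram.mem_cells _).mpr hc.1
  rw [hcells, Finset.card_biUnion]
  · exact Finset.sum_congr rfl fun i _ => (μ.rowLen_eq_card).symm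
  · intro x _ y _ hxy
    simp only [Finset.disjoint_left]
    intro c hc hc2
    rw [YoungDiagram.mem_row_iff] at hc hc2
    exact hxy (hc.2 ▸ hc2.2 ▸ rfl)

/-- Build a Young diagram from an antitone, eventually-zero row length function. -/
def ofFn (f : ℕ → ℕ) (hf : ∀ i j : ℕ, i ≤ j → f j ≤ f i) (n : ℕ)
    (h0 : ∀ i, n ≤ i → f i = 0) : YoungDiagram where
  cells := (Finset.range n ×ˢ Finset.range (f 0 + 1)).filter (fun c => c.2 < f c.1)
  isLowerSet := by
    rintro ⟨a1, a2⟩ ⟨b1, b2⟩ ⟨hi, hj⟩ hc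
    simp only [Finset.coe_filter, Set.mem_setOf_eq, Finset.mem_product, Finset.mem_range] at *
    have h1 : f a1 ≤ f b1 := hf _ _ hi
    refine ⟨⟨?_, ?_⟩, ?_⟩
    · by_contra hcon
      have := h0 b1 (by omega)
      omega
    · have := hf 0 b1 (Nat.zero_le _)
      omega
    · omega

lemma mem_ofFn (f : ℕ → ℕ) (hf : ∀ i j : ℕ, i ≤ j → f j ≤ f i) (n : ℕ)
    (h0 : ∀ i, n ≤ i → f i = 0) (i j : ℕ) :
    (i, j) ∈ ofFn f hf n h0 ↔ j < f i := by
  show (i, j) ∈ Finset.filter _ _ ↔ _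
  simp only [Finset.mem_filter, Finset.mem_product, Finset.mem_range]
  constructor
  · tauto
  · intro h
    refine ⟨⟨?_, ?_⟩, h⟩
    · by_contra hcon
      have := h0 i (by omega)
      omega
    · have := hf 0 i (Nat.zero_le _)
      omega

lemma rowLen_ofFn (f : ℕ → ℕ) (hf : ∀ i j : ℕ, i ≤ j → f j ≤ f i) (n : ℕ)
    (h0 : ∀ i, n ≤ i → f i = 0) (i : ℕ) :
    (ofFn f hf n h0).rowLen i = f i := by
  have h := fun j => (YoungDiagram.mem_iff_lt_rowLen (μ := ofFn f hf n h0) (i := i) (j := j)).symm.trans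
    (mem_ofFn f hf n h0 i j)
  have h1 := h ((ofFn f hf n h0).rowLen i)
  have h2 := h (f i)
  omega




lemma le_of_colLen_le {μ ν : YoungDiagram} (h : ∀ c, μ.colLen c ≤ ν.colLen c) : μ ≤ ν := by
  rw [← YoungDiagram.cells_subset_iff]
  intro c hc
  rw [YoungDiagram.mem_cells, YoungDiagram.mem_iff_lt_colLen] at *
  exact lt_of_lt_of_le hc (h c.2)

lemma colInterlace_iff {α β : YoungDiagram} :
    ColInterlace α β ↔ ∀ r, β.rowLen r ≤ α.rowLen r ∧ α.rowLen r ≤ β.rowLen r + 1 := by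
  constructor
  · intro h r
    have hle : β ≤ α := le_of_colLen_le (fun c => (h c).1)
    refine ⟨rowLen_le_of_le hle r, ?_⟩
    by_contra hcon
    have m1 : (r, β.rowLen r + 1) ∈ α := YoungDiagram.mem_iff_lt_rowLen.mpr (by omega)
    have m2 : r < α.colLen (β.rowLen r + 1) := YoungDiagram.mem_iff_lt_colLen.mp m1
    have h2 := (h (β.rowLen r)).2
    have m3 : (r, β.rowLen r) ∈ β := YoungDiagram.mem_iff_lt_colLen.mpr (by omega)
    rw [YoungDiagram.mem_iff_lt_rowLen] at m3
    omega
  · intro h c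
    refine ⟨colLen_le_of_le (le_of_rowLen_le fun r => (h r).1) c, ?_⟩
    rcases Nat.eq_zero_or_pos (α.colLen (c + 1)) with h0 | h0
    · omega
    · have m1 : (α.colLen (c + 1) - 1, c + 1) ∈ α :=
        YoungDiagram.mem_iff_lt_colLen.mpr (by omega)
      rw [YoungDiagram.mem_iff_lt_rowLen] at m1
      have h2 := (h (α.colLen (c + 1) - 1)).2
      have m2 : (α.colLen (c + 1) - 1, c) ∈ β :=
        YoungDiagram.mem_iff_lt_rowLen.mpr (by omega)
      rw [YoungDiagram.mem_iff_lt_colLen] at m2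
      omega

lemma card_transpose (μ : YoungDiagram) : μ.transpose.cells.card = μ.cells.card := by
  simp [YoungDiagram.transpose]

lemma rowInterlace_transpose {ν κ : YoungDiagram} :
    RowInterlace ν.transpose κ.transpose ↔ ColInterlace ν κ := by
  simp only [RowInterlace, ColInterlace, YoungDiagram.rowLen_transpose]

lemma colInterlace_transpose {ν κ : YoungDiagram} :
    ColInterlace ν.transpose κ.transpose ↔ RowInterlace ν κ := by
  simp only [RowInterlace, ColInterlace, YoungDiagram.colLen_transpose]

lemma intl_transpose {ε : Bool} {ν κ : YoungDiagram} :
    Intl ε ν.transpose κ.transpose ↔ Intl (!ε) ν κ := by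
  cases ε <;> simp [Intl, rowInterlace_transpose, colInterlace_transpose]

lemma card_sandwich (N E : Finset ℕ) (hEN : E ⊆ N) (b : ℕ) (hb : E.card ≤ b) :
    (N.powerset.filter fun T => E ⊆ T ∧ T.card = b).card
      = (N.card - E.card).choose (b - E.card) := by
  rw [← Finset.card_sdiff_of_subset hEN, ← Finset.card_powersetCard (b - E.card) (N \ E)]
  apply Finset.card_bij (fun T _ => T \ E)
  · intro T hT
    simp only [Finset.mem_filter, Finset.mem_powerset] at hT
    rw [Finset.mem_powersetCard]
    exact ⟨Finset.sdiff_subset_sdiff hT.1 (Finset.Subset.refl _),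
      by rw [Finset.card_sdiff_of_subset hT.2.1, hT.2.2]⟩
  · intro T1 h1 T2 h2 heq
    simp only [Finset.mem_filter, Finset.mem_powerset] at h1 h2
    have e1 := Finset.sdiff_union_of_subset h1.2.1
    have e2 := Finset.sdiff_union_of_subset h2.2.1
    rw [← e1, ← e2, heq]
  · intro S hS
    rw [Finset.mem_powersetCard] at hS
    have hdisj : Disjoint S E := Finset.disjoint_of_subset_left hS.1 Finset.sdiff_disjoint
    refine ⟨S ∪ E, ?_, ?_⟩
    · simp only [Finset.mem_filter, Finset.mem_powerset]
      refine ⟨Finset.union_subset (hS.1.trans Finset.sdiff_subset) hEN,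
        Finset.subset_union_right, ?_⟩
      rw [Finset.card_union_of_disjoint hdisj, hS.2]
      omega
    · rw [Finset.union_sdiff_right, Finset.sdiff_eq_self_of_disjoint hdisj]

lemma sandwich_eq (N E E' : Finset ℕ) (hEN : E ⊆ N) (hE'N : E' ⊆ N)
    (hcard : E.card = E'.card) (b : ℕ) :
    (N.powerset.filter fun T => E ⊆ T ∧ T.card = b).card
      = (N.powerset.filter fun T => E' ⊆ T ∧ T.card = b).card := by
  by_cases hb : E.card ≤ b
  · rw [card_sandwich N E hEN b hb, card_sandwich N E' hE'N b (hcard ▸ hb), hcard]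
  · rw [Finset.filter_false_of_mem, Finset.filter_false_of_mem]
    · intro T _
      rintro ⟨hsub, hc⟩
      exact hb (hcard ▸ hc ▸ Finset.card_le_card hsub)
    · intro T _
      rintro ⟨hsub, hc⟩
      exact hb (hc ▸ Finset.card_le_card hsub)
def SetL (ε₁ ε₂ : Bool) (μ ν : YoungDiagram) (a b : ℕ) : Set YoungDiagram :=
  {κ : YoungDiagram | Intl ε₂ κ μ ∧ Intl ε₁ ν κ ∧
    κ.cells.card = μ.cells.card + b ∧ κ.cells.card + a = ν.cells.card}






section Pure
variable (μ ν : YoungDiagram)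

/-- Lower bound for row `r` of an interlaced `κ`. -/
def Lf (r : ℕ) : ℕ := max (μ.rowLen r) (ν.rowLen (r + 1))

/-- Upper bound for row `r` of an interlaced `κ`. -/
def Uf : ℕ → ℕ
  | 0 => ν.rowLen 0
  | (r + 1) => min (ν.rowLen (r + 1)) (μ.rowLen r)

lemma Uf_le_nu (r : ℕ) : Uf μ ν r ≤ ν.rowLen r := by
  cases r with
  | zero => exact le_refl _
  | succ r => exact min_le_left _ _

lemma Lf_succ_le (r : ℕ) : Lf μ ν (r + 1) ≤ Lf μ ν r :=
  max_le_max (μ.rowLen_anti _ _ (by omega)) (ν.rowLen_anti _ _ (by omega))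

lemma Uf_succ_le_Lf (r : ℕ) : Uf μ ν (r + 1) ≤ Lf μ ν r :=
  (min_le_right _ _).trans (le_max_left _ _)

/-- The complement function defining the pure-case involution. -/
def hfun (κ : YoungDiagram) (r : ℕ) : ℕ :=
  max (Lf μ ν r) (min (Uf μ ν r) (Lf μ ν r + Uf μ ν r - κ.rowLen r))

lemma hfun_anti (κ : YoungDiagram) : ∀ i j : ℕ, i ≤ j → hfun μ ν κ j ≤ hfun μ ν κ i := by
  have step : ∀ r, hfun μ ν κ (r + 1) ≤ hfun μ ν κ r := by
    intro r
    have h1 : hfun μ ν κ (r + 1) ≤ max (Lf μ ν (r + 1)) (Uf μ ν (r + 1)) :=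
      max_le_max (le_refl _) (min_le_left _ _)
    have h2 : max (Lf μ ν (r + 1)) (Uf μ ν (r + 1)) ≤ Lf μ ν r :=
      max_le (Lf_succ_le μ ν r) (Uf_succ_le_Lf μ ν r)
    exact (h1.trans h2).trans (le_max_left _ _)
  intro i j hij
  induction j with
  | zero =>
    have : i = 0 := by omega
    subst this; exact le_refl _
  | succ j ih =>
    rcases Nat.lt_or_ge i (j + 1) with h | h
    · exact (step j).trans (ih (by omega))
    · have : i = j + 1 := by omega
      subst this; exact le_refl _

lemma hfun_vanish (κ : YoungDiagram) :
    ∀ i, μ.colLen 0 + ν.colLen 0 ≤ i → hfun μ ν κ i = 0 := by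
  intro i hi
  have hμ : μ.rowLen i = 0 := rowLen_eq_zero_iff.mpr (by omega)
  have hν1 : ν.rowLen (i + 1) = 0 := rowLen_eq_zero_iff.mpr (by omega)
  have hν0 : ν.rowLen i = 0 := rowLen_eq_zero_iff.mpr (by omega)
  have hL : Lf μ ν i = 0 := by simp [Lf, hμ, hν1]
  have hU : Uf μ ν i = 0 := by
    cases i with
    | zero => exact hν0
    | succ r => rw [Uf, hν0]; omega
  rw [hfun, hL, hU]
  omega

/-- The pure-case involution. -/
noncomputable def Ff (κ : YoungDiagram) : YoungDiagram :=
  ofFn (hfun μ ν κ) (hfun_anti μ ν κ) (μ.colLen 0 + ν.colLen 0) (hfun_vanish μ ν κ)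

lemma rowLen_Ff (κ : YoungDiagram) (r : ℕ) :
    (Ff μ ν κ).rowLen r = max (Lf μ ν r) (min (Uf μ ν r) (Lf μ ν r + Uf μ ν r - κ.rowLen r)) :=
  rowLen_ofFn _ _ _ _ r

variable {μ ν}

lemma bounds {κ : YoungDiagram} (h1 : RowInterlace κ μ) (h2 : RowInterlace ν κ) (r : ℕ) :
    Lf μ ν r ≤ κ.rowLen r ∧ κ.rowLen r ≤ Uf μ ν r := by
  constructor
  · exact max_le (h1 r).1 (h2 r).2
  · cases r with
    | zero => exact (h2 0).1
    | succ r => exact le_min (h2 (r + 1)).1 (h1 r).2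

lemma rowLen_Ff_add {κ : YoungDiagram} (h1 : RowInterlace κ μ) (h2 : RowInterlace ν κ) (r : ℕ) :
    (Ff μ ν κ).rowLen r + κ.rowLen r = Lf μ ν r + Uf μ ν r := by
  obtain ⟨hb1, hb2⟩ := bounds h1 h2 r
  rw [rowLen_Ff]
  have e1 : min (Uf μ ν r) (Lf μ ν r + Uf μ ν r - κ.rowLen r)
      = Lf μ ν r + Uf μ ν r - κ.rowLen r := min_eq_right (by omega)
  rw [e1, max_eq_right (by omega)]
  omega

lemma Ff_interlace {κ : YoungDiagram} (h1 : RowInterlace κ μ) (h2 : RowInterlace ν κ) :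
    RowInterlace (Ff μ ν κ) μ ∧ RowInterlace ν (Ff μ ν κ) := by
  have key := rowLen_Ff_add h1 h2
  constructor
  · intro r
    have k1 := key r
    have k2 := key (r + 1)
    obtain ⟨hb1, hb2⟩ := bounds h1 h2 r
    obtain ⟨hb1', hb2'⟩ := bounds h1 h2 (r + 1)
    have hLμ : μ.rowLen r ≤ Lf μ ν r := le_max_left _ _
    have hUμ : Uf μ ν (r + 1) ≤ Lf μ ν r := Uf_succ_le_Lf μ ν r
    have hUμ2 : Uf μ ν (r + 1) ≤ μ.rowLen r := min_le_right _ _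
    constructor
    · omega
    · omega
  · intro r
    have k1 := key r
    obtain ⟨hb1, hb2⟩ := bounds h1 h2 r
    have hU : Uf μ ν r ≤ ν.rowLen r := Uf_le_nu μ ν r
    have hL : ν.rowLen (r + 1) ≤ Lf μ ν r := le_max_right _ _
    constructor
    · omega
    · omega

lemma Ff_invol {κ : YoungDiagram} (h1 : RowInterlace κ μ) (h2 : RowInterlace ν κ) :
    Ff μ ν (Ff μ ν κ) = κ := by
  obtain ⟨h1', h2'⟩ := Ff_interlace h1 h2
  apply ext_rowLen
  intro r
  have k1 := rowLen_Ff_add h1 h2 r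
  have k2 := rowLen_Ff_add h1' h2' r
  omega

lemma sumLU {m : ℕ} (hm : ν.rowLen (m + 1) = 0) :
    ∑ r ∈ Finset.range (m + 1), (Lf μ ν r + Uf μ ν r)
      = ∑ r ∈ Finset.range (m + 1), μ.rowLen r + ∑ r ∈ Finset.range (m + 1), ν.rowLen r := by
  rw [Finset.sum_add_distrib]
  have hU : ∑ r ∈ Finset.range (m + 1), Uf μ ν r
      = (∑ r ∈ Finset.range m, min (ν.rowLen (r + 1)) (μ.rowLen r)) + ν.rowLen 0 := by
    rw [Finset.sum_range_succ']
    rfl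
  have hL : ∑ r ∈ Finset.range (m + 1), Lf μ ν r
      = (∑ r ∈ Finset.range m, max (μ.rowLen r) (ν.rowLen (r + 1))) + μ.rowLen m := by
    rw [Finset.sum_range_succ]
    congr 1
    rw [Lf, hm]
    omega
  rw [hU, hL]
  have hsum : (∑ r ∈ Finset.range m, max (μ.rowLen r) (ν.rowLen (r + 1)))
      + (∑ r ∈ Finset.range m, min (ν.rowLen (r + 1)) (μ.rowLen r))
      = (∑ r ∈ Finset.range m, μ.rowLen r) + (∑ r ∈ Finset.range m, ν.rowLen (r + 1)) := by
    rw [← Finset.sum_add_distrib, ← Finset.sum_add_distrib]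
    apply Finset.sum_congr rfl
    intro r _
    omega
  have hν : ∑ r ∈ Finset.range (m + 1), ν.rowLen r
      = (∑ r ∈ Finset.range m, ν.rowLen (r + 1)) + ν.rowLen 0 := Finset.sum_range_succ'  _ _
  have hμ : ∑ r ∈ Finset.range (m + 1), μ.rowLen r
      = (∑ r ∈ Finset.range m, μ.rowLen r) + μ.rowLen m := Finset.sum_range_succ _ _
  omega

lemma Ff_card {κ : YoungDiagram} (h1 : RowInterlace κ μ) (h2 : RowInterlace ν κ) :
    (Ff μ ν κ).cells.card + κ.cells.card = μ.cells.card + ν.cells.card := by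
  set m := ν.colLen 0 with hmdef
  have hκν : κ ≤ ν := le_of_rowLen_le fun r => (h2 r).1
  have hμκ : μ ≤ κ := le_of_rowLen_le fun r => (h1 r).1
  have hFν : Ff μ ν κ ≤ ν := le_of_rowLen_le fun r => by
    have := rowLen_Ff_add h1 h2 r
    have hb := bounds h1 h2 r
    have := Uf_le_nu μ ν r
    omega
  have hcν : ν.colLen 0 ≤ m + 1 := by omega
  have hcκ : κ.colLen 0 ≤ m + 1 := le_trans (colLen_le_of_le hκν 0) (by omega)
  have hcμ : μ.colLen 0 ≤ m + 1 := le_trans (colLen_le_of_le (hμκ.trans hκν) 0) (by omega)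
  have hcF : (Ff μ ν κ).colLen 0 ≤ m + 1 := le_trans (colLen_le_of_le hFν 0) (by omega)
  rw [card_eq_sum_rowLen κ hcκ, card_eq_sum_rowLen μ hcμ, card_eq_sum_rowLen ν hcν,
    card_eq_sum_rowLen _ hcF]
  have hm : ν.rowLen (m + 1) = 0 := rowLen_eq_zero_iff.mpr (by omega)
  have := sumLU (μ := μ) hm
  rw [← this, ← Finset.sum_add_distrib]
  apply Finset.sum_congr rfl
  intro r _
  exact rowLen_Ff_add h1 h2 r

lemma mem_SetL_TT {κ : YoungDiagram} {a b : ℕ} :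
    κ ∈ SetL true true μ ν a b ↔ RowInterlace κ μ ∧ RowInterlace ν κ ∧
      κ.cells.card = μ.cells.card + b ∧ κ.cells.card + a = ν.cells.card := Iff.rfl

lemma Ff_mapsTo {κ : YoungDiagram} {a b : ℕ} (hκ : κ ∈ SetL true true μ ν a b) :
    Ff μ ν κ ∈ SetL true true μ ν b a := by
  obtain ⟨h1, h2, hc1, hc2⟩ := hκ
  obtain ⟨h1', h2'⟩ := Ff_interlace h1 h2
  have hcard := Ff_card h1 h2
  exact ⟨h1', h2', by omega, by omega⟩

lemma coreTT (a b : ℕ) :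
    (SetL true true μ ν a b).ncard = (SetL true true μ ν b a).ncard := by
  have himage : Ff μ ν '' SetL true true μ ν a b = SetL true true μ ν b a := by
    ext κ
    constructor
    · rintro ⟨κ', hκ', rfl⟩
      exact Ff_mapsTo hκ'
    · intro hκ
      obtain ⟨h1, h2, -, -⟩ := id hκ
      exact ⟨Ff μ ν κ, Ff_mapsTo hκ, Ff_invol h1 h2⟩
  rw [← himage]
  rw [Set.ncard_image_of_injOn]
  intro x hx y hy hxy
  obtain ⟨hx1, hx2, -, -⟩ := id hx
  obtain ⟨hy1, hy2, -, -⟩ := id hy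
  rw [← Ff_invol hx1 hx2, ← Ff_invol hy1 hy2, hxy]

end Pure





lemma anti_of_succ {f : ℕ → ℕ} (h : ∀ r, f (r + 1) ≤ f r) :
    ∀ i j : ℕ, i ≤ j → f j ≤ f i := by
  intro i j hij
  induction j with
  | zero =>
    have : i = 0 := by omega
    subst this; exact le_refl _
  | succ j ih =>
    rcases Nat.lt_or_ge i (j + 1) with hlt | hge
    · exact (h j).trans (ih (by omega))
    · have : i = j + 1 := by omega
      subst this; exact le_refl _

lemma ncard_eq_card_finset (S : Set YoungDiagram) (f : YoungDiagram → Finset ℕ)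
    (F : Finset (Finset ℕ)) (hinj : Set.InjOn f S) (him : f '' S = ↑F) :
    S.ncard = F.card := by
  rw [← Set.ncard_coe_finset, ← him, Set.ncard_image_of_injOn hinj]

lemma rowLen_pos_lt {ν : YoungDiagram} {r : ℕ} (h : 0 < ν.rowLen r) : r < ν.colLen 0 := by
  by_contra hcon
  have := rowLen_eq_zero_iff (μ := ν) (i := r)
  omega

lemma coreTF (μ ν : YoungDiagram) (a b : ℕ) :
    (SetL true false μ ν a b).ncard = (SetL false true μ ν b a).ncard := by
  have hS1 : ∀ κ, κ ∈ SetL true false μ ν a b ↔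
      ((∀ r, μ.rowLen r ≤ κ.rowLen r ∧ κ.rowLen r ≤ μ.rowLen r + 1) ∧
        RowInterlace ν κ ∧
        κ.cells.card = μ.cells.card + b ∧ κ.cells.card + a = ν.cells.card) := by
    intro κ
    exact and_congr_left' colInterlace_iff
  have hS2 : ∀ κ, κ ∈ SetL false true μ ν b a ↔
      (RowInterlace κ μ ∧
        (∀ r, κ.rowLen r ≤ ν.rowLen r ∧ ν.rowLen r ≤ κ.rowLen r + 1) ∧
        κ.cells.card = μ.cells.card + a ∧ κ.cells.card + b = ν.cells.card) := by
    intro κ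
    exact and_congr_right' (and_congr_left' colInterlace_iff)
  by_cases hd : ∀ r, μ.rowLen r ≤ ν.rowLen r ∧ ν.rowLen (r + 1) ≤ μ.rowLen r + 1
  swap
  · -- degenerate case : both sets are empty
    push_neg at hd
    obtain ⟨r, hr⟩ := hd
    have e1 : SetL true false μ ν a b = ∅ := by
      ext κ
      simp only [Set.mem_empty_iff_false, iff_false]
      intro hκ
      obtain ⟨hCI, hRI, -, -⟩ := (hS1 κ).mp hκ
      have c1 := hCI r
      have c2 := hRI r
      have c3 := hRI (r + 1)
      have c4 := hCI (r + 1)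
      rcases hr (c1.1.trans c2.1) with hlt
      omega
    have e2 : SetL false true μ ν b a = ∅ := by
      ext κ
      simp only [Set.mem_empty_iff_false, iff_false]
      intro hκ
      obtain ⟨hRI, hCI, -, -⟩ := (hS2 κ).mp hκ
      have c1 := hRI r
      have c2 := hCI r
      have c3 := hCI (r + 1)
      rcases hr (c1.1.trans c2.1) with hlt
      omega
    rw [e1, e2]
  · -- nondegenerate case
    have hμν : μ ≤ ν := le_of_rowLen_le fun r => (hd r).1
    set M := ν.colLen 0 with hM
    have hcolμ : μ.colLen 0 ≤ M := colLen_le_of_le hμν 0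
    have hlt_of_pos : ∀ r, 0 < ν.rowLen r → r < M := fun r h => rowLen_pos_lt h
    set N : Finset ℕ := (range M).filter (fun r => μ.rowLen r < ν.rowLen r) with hN
    set E : Finset ℕ := (range M).filter (fun r => μ.rowLen r < ν.rowLen (r + 1)) with hE
    set E' : Finset ℕ := E.image (· + 1) with hE'
    have memN : ∀ r, r ∈ N ↔ μ.rowLen r < ν.rowLen r := by
      intro r
      simp only [hN, mem_filter, mem_range]
      constructor
      · tauto
      · intro h; exact ⟨hlt_of_pos r (by omega), h⟩
    have memE : ∀ r, r ∈ E ↔ μ.rowLen r < ν.rowLen (r + 1) := by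
      intro r
      simp only [hE, mem_filter, mem_range]
      constructor
      · tauto
      · intro h
        have : 0 < ν.rowLen r := lt_of_le_of_lt (Nat.zero_le _)
          (lt_of_lt_of_le h (ν.rowLen_anti r (r+1) (by omega)))
        exact ⟨hlt_of_pos r this, h⟩
    have memE' : ∀ s, s ∈ E' ↔ ∃ r, (μ.rowLen r < ν.rowLen (r + 1)) ∧ s = r + 1 := by
      intro s
      simp only [hE', mem_image]
      constructor
      · rintro ⟨r, hr, rfl⟩
        exact ⟨r, (memE r).mp hr, rfl⟩
      · rintro ⟨r, hr, rfl⟩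
        exact ⟨r, (memE r).mpr hr, rfl⟩
    have hEN : E ⊆ N := by
      intro r hr
      rw [memE] at hr
      rw [memN]
      exact lt_of_lt_of_le hr (ν.rowLen_anti r (r + 1) (by omega))
    have hE'N : E' ⊆ N := by
      intro s hs
      rw [memE'] at hs
      obtain ⟨r, hr, rfl⟩ := hs
      rw [memN]
      exact lt_of_le_of_lt (μ.rowLen_anti r (r + 1) (by omega)) hr
    have hcardE : E.card = E'.card := by
      rw [hE', Finset.card_image_of_injective _ (add_left_injective 1)]
    by_cases hsz : μ.cells.card + b + a = ν.cells.card
    swap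
    · -- size mismatch : both sets empty
      have e1 : SetL true false μ ν a b = ∅ := by
        ext κ
        simp only [Set.mem_empty_iff_false, iff_false]
        rintro ⟨-, -, hc1, hc2⟩
        omega
      have e2 : SetL false true μ ν b a = ∅ := by
        ext κ
        simp only [Set.mem_empty_iff_false, iff_false]
        rintro ⟨-, -, hc1, hc2⟩
        omega
      rw [e1, e2]
    have filterT : ∀ T : Finset ℕ, T ⊆ range M → (range M).filter (fun r => r ∈ T) = T := by
      intro T hsub
      ext r
      simp only [mem_filter, mem_range]
      exact ⟨fun h => h.2, fun h => ⟨mem_range.mp (hsub h), h⟩⟩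
    -- encoding of the first set
    have key1 : (SetL true false μ ν a b).ncard
        = (N.powerset.filter fun T => E ⊆ T ∧ T.card = b).card := by
      apply ncard_eq_card_finset _
        (fun κ => (range M).filter (fun r => μ.rowLen r < κ.rowLen r))
      · -- injectivity
        intro κ1 h1 κ2 h2 heq
        obtain ⟨hCI1, hRI1, -, -⟩ := (hS1 κ1).mp h1
        obtain ⟨hCI2, hRI2, -, -⟩ := (hS1 κ2).mp h2
        apply ext_rowLen
        intro r
        rcases Nat.lt_or_ge r M with hrM | hrM
        · have heqb : (range M).filter (fun r => μ.rowLen r < κ1.rowLen r)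
              = (range M).filter (fun r => μ.rowLen r < κ2.rowLen r) := heq
          have hmem : (r ∈ (range M).filter (fun r => μ.rowLen r < κ1.rowLen r))
              ↔ (r ∈ (range M).filter (fun r => μ.rowLen r < κ2.rowLen r)) := by rw [heqb]
          simp only [mem_filter, mem_range] at hmem
          have b1 := hCI1 r
          have b2 := hCI2 r
          omega
        · have z : ν.rowLen r = 0 := rowLen_eq_zero_iff.mpr hrM
          have z1 := (hRI1 r).1
          have z2 := (hRI2 r).1
          omega
      · -- image identification
        ext T
        simp only [Set.mem_image, Finset.coe_filter, Set.mem_setOf_eq, mem_powerset]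
        constructor
        · rintro ⟨κ, hκ, rfl⟩
          obtain ⟨hCI, hRI, hc1, hc2⟩ := (hS1 κ).mp hκ
          have hκν : κ ≤ ν := le_of_rowLen_le fun r => (hRI r).1
          have hcolκ : κ.colLen 0 ≤ M := colLen_le_of_le hκν 0
          refine ⟨?_, ?_, ?_⟩
          · intro r hr
            simp only [mem_filter, mem_range] at hr
            rw [memN]
            exact lt_of_lt_of_le hr.2 (hRI r).1
          · intro r hr
            rw [memE] at hr
            simp only [mem_filter, mem_range]
            have hpos : 0 < ν.rowLen r := lt_of_le_of_lt (Nat.zero_le _)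
              (lt_of_lt_of_le hr (ν.rowLen_anti r (r + 1) (by omega)))
            exact ⟨hlt_of_pos r hpos, lt_of_lt_of_le hr (hRI r).2⟩
          · have hsum : κ.cells.card = μ.cells.card
                + ((range M).filter (fun r => μ.rowLen r < κ.rowLen r)).card := by
              rw [card_eq_sum_rowLen κ hcolκ, card_eq_sum_rowLen μ hcolμ,
                Finset.card_filter, ← Finset.sum_add_distrib]
              apply Finset.sum_congr rfl
              intro r _
              have hb := hCI r
              by_cases h : μ.rowLen r < κ.rowLen r
              · simp only [if_pos h]; omega
              · simp only [if_neg h]; omega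
            omega
        · rintro ⟨hTN, hET, hTb⟩
          have hTM : T ⊆ range M := fun r hr => by
            have := hTN hr
            rw [hN, mem_filter] at this
            exact this.1
          set f : ℕ → ℕ := fun r => μ.rowLen r + (if r ∈ T then 1 else 0) with hf
          have hstep : ∀ r, f (r + 1) ≤ f r := by
            intro r
            have hmono := μ.rowLen_anti r (r + 1) (by omega)
            simp only [hf]
            by_cases h1 : r + 1 ∈ T
            · simp only [if_pos h1]
              by_cases h2 : μ.rowLen (r + 1) < μ.rowLen r
              · split <;> omega
              · have hn : μ.rowLen (r + 1) < ν.rowLen (r + 1) := (memN _).mp (hTN h1)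
                have hTr : r ∈ T := hET ((memE r).mpr (by omega))
                simp only [if_pos hTr]
                omega
            · simp only [if_neg h1]
              split <;> omega
          have hvanish : ∀ i, M ≤ i → f i = 0 := by
            intro i hi
            have hz : μ.rowLen i = 0 := rowLen_eq_zero_iff.mpr (by omega)
            have hni : i ∉ T := fun hmem => by
              have := mem_range.mp (hTM hmem)
              omega
            simp only [hf, if_neg hni, hz]
          refine ⟨ofFn f (anti_of_succ hstep) M hvanish, ?_, ?_⟩
          · set κ := ofFn f (anti_of_succ hstep) M hvanish with hκdef
            have hκr : ∀ r, κ.rowLen r = f r := fun r => rowLen_ofFn _ _ _ _ r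
            have hfbound : ∀ r, μ.rowLen r ≤ f r ∧ f r ≤ μ.rowLen r + 1 := by
              intro r
              simp only [hf]
              split <;> omega
            have hfν : ∀ r, f r ≤ ν.rowLen r ∧ ν.rowLen (r + 1) ≤ f r := by
              intro r
              constructor
              · by_cases h : r ∈ T
                · have := (memN r).mp (hTN h)
                  simp only [hf, if_pos h]
                  omega
                · simp only [hf, if_neg h]
                  exact (hd r).1
              · by_cases h : μ.rowLen r < ν.rowLen (r + 1)
                · have hTr : r ∈ T := hET ((memE r).mpr h)
                  have := (hd r).2
                  simp only [hf, if_pos hTr]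
                  omega
                · simp only [hf]
                  split <;> omega
            have hκν : κ ≤ ν := le_of_rowLen_le fun r => by
              rw [hκr]; exact (hfν r).1
            have hcolκ : κ.colLen 0 ≤ M := colLen_le_of_le hκν 0
            have hcard : κ.cells.card = μ.cells.card + b := by
              rw [card_eq_sum_rowLen κ hcolκ, card_eq_sum_rowLen μ hcolμ]
              have : ∀ r ∈ range M, κ.rowLen r = μ.rowLen r + (if r ∈ T then 1 else 0) :=
                fun r _ => hκr r
              rw [Finset.sum_congr rfl this, Finset.sum_add_distrib]
              congr 1
              rw [← Finset.card_filter, filterT T hTM, hTb]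
            rw [hS1]
            refine ⟨fun r => by rw [hκr]; exact hfbound r,
              fun r => by rw [hκr]; exact hfν r, hcard, by omega⟩
          · ext r
            simp only [mem_filter, mem_range]
            set κ := ofFn f (anti_of_succ hstep) M hvanish with hκdef
            have hκr : κ.rowLen r = f r := rowLen_ofFn _ _ _ _ r
            rw [hκr]
            simp only [hf]
            constructor
            · rintro ⟨-, hlt⟩
              by_contra h
              simp only [if_neg h] at hlt
              omega
            · intro h
              exact ⟨mem_range.mp (hTM h), by simp only [if_pos h]; omega⟩
    -- encoding of the second set
    have key2 : (SetL false true μ ν b a).ncard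
        = (N.powerset.filter fun T => E' ⊆ T ∧ T.card = b).card := by
      apply ncard_eq_card_finset _
        (fun κ => (range M).filter (fun r => κ.rowLen r < ν.rowLen r))
      · -- injectivity
        intro κ1 h1 κ2 h2 heq
        obtain ⟨hRI1, hCI1, -, -⟩ := (hS2 κ1).mp h1
        obtain ⟨hRI2, hCI2, -, -⟩ := (hS2 κ2).mp h2
        apply ext_rowLen
        intro r
        rcases Nat.lt_or_ge r M with hrM | hrM
        · have heqb : (range M).filter (fun r => κ1.rowLen r < ν.rowLen r)
              = (range M).filter (fun r => κ2.rowLen r < ν.rowLen r) := heq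
          have hmem : (r ∈ (range M).filter (fun r => κ1.rowLen r < ν.rowLen r))
              ↔ (r ∈ (range M).filter (fun r => κ2.rowLen r < ν.rowLen r)) := by rw [heqb]
          simp only [mem_filter, mem_range] at hmem
          have b1 := hCI1 r
          have b2 := hCI2 r
          omega
        · have z : ν.rowLen r = 0 := rowLen_eq_zero_iff.mpr hrM
          have z1 := (hCI1 r).1
          have z2 := (hCI2 r).1
          omega
      · -- image identification
        ext T
        simp only [Set.mem_image, Finset.coe_filter, Set.mem_setOf_eq, mem_powerset]
        constructor
        · rintro ⟨κ, hκ, rfl⟩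
          obtain ⟨hRI, hCI, hc1, hc2⟩ := (hS2 κ).mp hκ
          have hκν : κ ≤ ν := le_of_rowLen_le fun r => (hCI r).1
          have hcolκ : κ.colLen 0 ≤ M := colLen_le_of_le hκν 0
          refine ⟨?_, ?_, ?_⟩
          · intro r hr
            simp only [mem_filter, mem_range] at hr
            rw [memN]
            exact lt_of_le_of_lt (hRI r).1 hr.2
          · intro s hs
            rw [memE'] at hs
            obtain ⟨r, hr, rfl⟩ := hs
            simp only [mem_filter, mem_range]
            have h1 : κ.rowLen (r + 1) ≤ μ.rowLen r := (hRI r).2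
            have hpos : 0 < ν.rowLen (r + 1) := by omega
            exact ⟨hlt_of_pos (r + 1) hpos, by omega⟩
          · have hsum : ν.cells.card = κ.cells.card
                + ((range M).filter (fun r => κ.rowLen r < ν.rowLen r)).card := by
              rw [card_eq_sum_rowLen κ hcolκ, card_eq_sum_rowLen ν (le_refl M),
                Finset.card_filter, ← Finset.sum_add_distrib]
              apply Finset.sum_congr rfl
              intro r _
              have hb := hCI r
              by_cases h : κ.rowLen r < ν.rowLen r
              · simp only [if_pos h]; omega
              · simp only [if_neg h]; omega
            omega
        · rintro ⟨hTN, hET, hTb⟩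
          have hTM : T ⊆ range M := fun r hr => by
            have := hTN hr
            rw [hN, mem_filter] at this
            exact this.1
          set g : ℕ → ℕ := fun r => ν.rowLen r - (if r ∈ T then 1 else 0) with hg
          have hgbound : ∀ r, μ.rowLen r ≤ g r ∧ g r ≤ ν.rowLen r ∧ ν.rowLen r ≤ g r + 1 := by
            intro r
            by_cases h : r ∈ T
            · have := (memN r).mp (hTN h)
              simp only [hg, if_pos h]
              omega
            · have := (hd r).1
              simp only [hg, if_neg h]
              omega
          have hgsucc : ∀ r, g (r + 1) ≤ μ.rowLen r := by
            intro r
            by_cases h : μ.rowLen r < ν.rowLen (r + 1)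
            · have hTr : r + 1 ∈ T := hET ((memE' (r + 1)).mpr ⟨r, h, rfl⟩)
              have := (hd r).2
              simp only [hg, if_pos hTr]
              omega
            · have : g (r + 1) ≤ ν.rowLen (r + 1) := (hgbound (r + 1)).2.1
              omega
          have hstep : ∀ r, g (r + 1) ≤ g r := fun r =>
            (hgsucc r).trans (hgbound r).1
          have hvanish : ∀ i, M ≤ i → g i = 0 := by
            intro i hi
            have hz : ν.rowLen i = 0 := rowLen_eq_zero_iff.mpr hi
            simp only [hg, hz]
            omega
          refine ⟨ofFn g (anti_of_succ hstep) M hvanish, ?_, ?_⟩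
          · set κ := ofFn g (anti_of_succ hstep) M hvanish with hκdef
            have hκr : ∀ r, κ.rowLen r = g r := fun r => rowLen_ofFn _ _ _ _ r
            have hκν : κ ≤ ν := le_of_rowLen_le fun r => by
              rw [hκr]; exact (hgbound r).2.1
            have hcolκ : κ.colLen 0 ≤ M := colLen_le_of_le hκν 0
            have hcard : κ.cells.card + T.card = ν.cells.card := by
              rw [card_eq_sum_rowLen κ hcolκ, card_eq_sum_rowLen ν (le_refl M)]
              have hre : ∀ r ∈ range M, κ.rowLen r = g r := fun r _ => hκr r
              rw [Finset.sum_congr rfl hre]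
              have hTcard : T.card = ∑ r ∈ range M, (if r ∈ T then 1 else 0) := by
                rw [← Finset.card_filter, filterT T hTM]
              rw [hTcard, ← Finset.sum_add_distrib]
              apply Finset.sum_congr rfl
              intro r _
              have h1 := (hgbound r).2.1
              have h2 := (hgbound r).2.2
              by_cases h : r ∈ T
              · have := (memN r).mp (hTN h)
                simp only [hg, if_pos h]
                omega
              · simp only [hg, if_neg h]
                omega
            rw [hS2]
            refine ⟨fun r => by rw [hκr, hκr]; exact ⟨(hgbound r).1, hgsucc r⟩,
              fun r => by rw [hκr]; exact ⟨(hgbound r).2.1, (hgbound r).2.2⟩,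
              by omega, by omega⟩
          · ext r
            simp only [mem_filter, mem_range]
            set κ := ofFn g (anti_of_succ hstep) M hvanish with hκdef
            have hκr : κ.rowLen r = g r := rowLen_ofFn _ _ _ _ r
            rw [hκr]
            simp only [hg]
            constructor
            · rintro ⟨-, hlt⟩
              by_contra h
              simp only [if_neg h] at hlt
              omega
            · intro h
              have hn := (memN r).mp (hTN h)
              exact ⟨mem_range.mp (hTM h), by simp only [if_pos h]; omega⟩
    rw [key1, key2]
    exact sandwich_eq N E E' hEN hE'N hcardE b
lemma intl_transpose' {ε : Bool} {ν κ : YoungDiagram} :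
    Intl ε ν κ ↔ Intl (!ε) ν.transpose κ.transpose := by
  have h := intl_transpose (ε := !ε) (ν := ν) (κ := κ)
  rw [Bool.not_not] at h
  exact h.symm

lemma SetL_transpose (ε₁ ε₂ : Bool) (μ ν : YoungDiagram) (a b : ℕ) :
    YoungDiagram.transpose '' SetL ε₁ ε₂ μ ν a b
      = SetL (!ε₁) (!ε₂) μ.transpose ν.transpose a b := by
  ext κ
  constructor
  · rintro ⟨κ', ⟨p1, p2, p3, p4⟩, rfl⟩
    exact ⟨intl_transpose'.mp p1, intl_transpose'.mp p2,
      by rw [card_transpose, card_transpose]; exact p3,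
      by rw [card_transpose, card_transpose]; exact p4⟩
  · rintro ⟨p1, p2, p3, p4⟩
    refine ⟨κ.transpose, ⟨?_, ?_, ?_, ?_⟩, κ.transpose_transpose⟩
    · have h := intl_transpose'.mp p1
      rw [Bool.not_not, μ.transpose_transpose] at h
      exact h
    · have h := intl_transpose'.mp p2
      rw [Bool.not_not, ν.transpose_transpose] at h
      exact h
    · rw [card_transpose] at p3 ⊢
      exact p3
    · rw [card_transpose] at p4 ⊢
      exact p4

lemma ncard_SetL_transpose (ε₁ ε₂ : Bool) (μ ν : YoungDiagram) (a b : ℕ) :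
    (SetL ε₁ ε₂ μ ν a b).ncard = (SetL (!ε₁) (!ε₂) μ.transpose ν.transpose a b).ncard := by
  rw [← SetL_transpose, Set.ncard_image_of_injOn]
  intro x _ y _ h
  exact YoungDiagram.transpose_eq_iff.mp h

lemma core (ε₁ ε₂ : Bool) (μ ν : YoungDiagram) (a b : ℕ) :
    (SetL ε₁ ε₂ μ ν a b).ncard = (SetL ε₂ ε₁ μ ν b a).ncard := by
  cases ε₁ <;> cases ε₂
  · calc (SetL false false μ ν a b).ncard
        = (SetL true true μ.transpose ν.transpose a b).ncard :=
          ncard_SetL_transpose false false μ ν a b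
      _ = (SetL true true μ.transpose ν.transpose b a).ncard := coreTT a b
      _ = (SetL false false μ.transpose.transpose ν.transpose.transpose b a).ncard :=
          ncard_SetL_transpose true true μ.transpose ν.transpose b a
      _ = (SetL false false μ ν b a).ncard := by
          rw [μ.transpose_transpose, ν.transpose_transpose]
  · exact (coreTF μ ν b a).symm
  · exact coreTF μ ν a b
  · exact coreTT a b

end VC

/-- Vertex operators of the same subscript commute:
`Γ^{ε₁}_+(p₁) Γ^{ε₂}_+(p₂) = Γ^{ε₂}_+(p₂) Γ^{ε₁}_+(p₁)` and
`Γ^{ε₁}_−(p₁) Γ^{ε₂}_−(p₂) = Γ^{ε₂}_−(p₂) Γ^{ε₁}_−(p₁)`, stated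
coefficientwise between two basis states `⟨ν|, |μ⟩`: the coefficient of
`p₁^{−a} p₂^{−b}` (resp. `p₁^{a} p₂^{b}`) on the two sides counts
intermediate diagrams `κ` in two-step interlacing chains, and these counts
agree. -/
theorem stmt11 (ε₁ ε₂ : Bool) (μ ν : YoungDiagram) (a b : ℕ) :
    ({κ : YoungDiagram | Intl ε₂ κ μ ∧ Intl ε₁ ν κ ∧
        κ.cells.card = μ.cells.card + b ∧ κ.cells.card + a = ν.cells.card}.ncard
      = {κ : YoungDiagram | Intl ε₁ κ μ ∧ Intl ε₂ ν κ ∧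
          κ.cells.card = μ.cells.card + a ∧ κ.cells.card + b = ν.cells.card}.ncard) ∧
    ({κ : YoungDiagram | Intl ε₂ μ κ ∧ Intl ε₁ κ ν ∧
        κ.cells.card = ν.cells.card + a ∧ κ.cells.card + b = μ.cells.card}.ncard
      = {κ : YoungDiagram | Intl ε₁ μ κ ∧ Intl ε₂ κ ν ∧
          κ.cells.card = ν.cells.card + b ∧ κ.cells.card + a = μ.cells.card}.ncard) := by
  constructor
  · exact VC.core ε₁ ε₂ μ ν a b
  · have e1 : {κ : YoungDiagram | Intl ε₂ μ κ ∧ Intl ε₁ κ ν ∧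
        κ.cells.card = ν.cells.card + a ∧ κ.cells.card + b = μ.cells.card}
        = VC.SetL ε₂ ε₁ ν μ b a := by
      ext κ
      simp only [VC.SetL, Set.mem_setOf_eq]
      tauto
    have e2 : {κ : YoungDiagram | Intl ε₁ μ κ ∧ Intl ε₂ κ ν ∧
        κ.cells.card = ν.cells.card + b ∧ κ.cells.card + a = μ.cells.card}
        = VC.SetL ε₁ ε₂ ν μ a b := by
      ext κ
      simp only [VC.SetL, Set.mem_setOf_eq]
      tauto
    rw [e1, e2]
    exact VC.core ε₂ ε₁ ν μ b a
end

section
/- Fix a generic stability parameter ζ ∈ ℝ^I with ζ·δ < 0 (i.e. ζ₀ + ⋯ + ζ_{L−1} < 0 and ζ·α ≠ 0 for every root α). Then there exists a unique θ ∈ Θ such that for all half-integers h < h', one has α_{[h,h']}·ζ < 0 if and only if θ(h) < θ(h'). That is, the chambers of the affine A_{L−1} arrangement in the half-space {ζ : ζ·δ < 0} are in bijection with Θ. -/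
/-- The positive root `α_{[h,h']}` for `h = n + 1/2 < h' = n' + 1/2`
(integer encoding): coordinate at `i ∈ ℤ/Lℤ` is the number of integers in
`(h, h') = (n, n']` with residue `i`. -/
noncomputable def aroot (L : ℕ) (n n' : ℤ) : ZMod L → ℤ :=
  fun i => (((Finset.Ioc n n').filter (fun k : ℤ => (k : ZMod L) = i)).card : ℤ)

/-- `θ ∈ Θ` (integer encoding of half-integers). -/
def IsTheta (L : ℕ) (θ : ℤ → ℤ) : Prop :=
  Function.Bijective θ ∧ (∀ n : ℤ, θ (n + L) = θ n + L) ∧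
    (∑ n ∈ Finset.range L, θ (n : ℤ)) = ∑ n ∈ Finset.range L, (n : ℤ)

/-!
Extend `ζ` to a potential `P : ℤ → ℝ` with `P n - P n' = ζ·α_{[n,n']}` for `n < n'`. The
required `θ` are then exactly the elements of `Θ` that order `ℤ` as `P` does. Genericity makes
`P` injective, and `ζ·δ < 0` gives `P (n + L) = P n + c` with `c > 0`, so below any level each
residue class mod `L` has a last point; adding up their positions yields an order-preserving,
`L`-equivariant injection `ℤ → ℤ`. Equivariance makes it bijective (it induces an injective, hence
bijective, self-map of `ℤ/L`), and shifting it by a constant gives the normalization of `Θ`.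
Uniqueness: two order-preserving bijections `ℤ → ℤ` differ by a translation, which the
normalization kills.
-/

open Finset Function

namespace AffineChamber

section Order

variable {α β γ : Type*} [LinearOrder β] [LinearOrder γ] {f : α → β} {g : α → γ}

theorem lt_iff_lt_of_lt_imp_lt (hg : Injective g) (h : ∀ a b, g a < g b → f a < f b) (a b : α) :
    f a < f b ↔ g a < g b := by
  refine ⟨fun hf => ?_, h a b⟩
  rcases lt_trichotomy (g a) (g b) with hlt | heq | hgt
  · exact hlt
  · exact absurd hf (by rw [hg heq]; exact lt_irrefl _)
  · exact absurd (h b a hgt) hf.asymm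

theorem lt_iff_lt_of_forall_lt_iff_lt [LinearOrder α] (hf : Injective f) (hg : Injective g)
    (h : ∀ a b, a < b → (f a < f b ↔ g a < g b)) (a b : α) : f a < f b ↔ g a < g b := by
  rcases lt_trichotomy a b with hab | rfl | hba
  · exact h a b hab
  · simp
  · rw [lt_iff_not_ge, lt_iff_not_ge, (hf.ne hba.ne).le_iff_lt, (hg.ne hba.ne).le_iff_lt,
      h b a hba]

end Order

theorem eq_add_of_strictMono_of_surjective {ψ : ℤ → ℤ} (hψ : StrictMono ψ)
    (hsurj : Surjective ψ) (t : ℤ) : ψ t = t + ψ 0 := by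
  have hstep (t : ℤ) : ψ (t + 1) = ψ t + 1 := by
    simpa only [Order.succ_eq_add_one, StrictMono.coe_orderIsoOfSurjective] using
      (hψ.orderIsoOfSurjective ψ hsurj).map_succ t
  induction t using Int.induction_on with
  | zero => simp
  | succ k ih => rw [hstep, ih]; ring
  | pred k ih =>
    have := hstep (-k - 1)
    rw [sub_add_cancel] at this
    linarith

theorem exists_eq_add_of_lt_iff_lt {θ θ' : ℤ → ℤ} (hθ : Bijective θ) (hθ' : Surjective θ')
    (h : ∀ a b, θ a < θ b ↔ θ' a < θ' b) : ∃ k, ∀ n, θ' n = θ n + k := by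
  set ψ := θ' ∘ surjInv hθ.2
  have hψθ (n : ℤ) : ψ (θ n) = θ' n := congrArg θ' (leftInverse_surjInv hθ n)
  have hmono : StrictMono ψ := fun t t' htt => by
    simp only [ψ, comp_apply]
    rwa [← h, surjInv_eq hθ.2, surjInv_eq hθ.2]
  have hsurj : Surjective ψ := fun t => by
    obtain ⟨n, rfl⟩ := hθ' t
    exact ⟨θ n, hψθ n⟩
  exact ⟨ψ 0, fun n => by rw [← hψθ, eq_add_of_strictMono_of_surjective hmono hsurj]⟩

theorem map_add_mul_of_map_add {G : Type*} [AddCommGroup G] {f : ℤ → G} {p : ℤ} {c : G}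
    (h : ∀ n, f (n + p) = f n + c) (n k : ℤ) : f (n + k * p) = f n + k • c := by
  induction k using Int.induction_on with
  | zero => simp
  | succ k ih => rw [add_mul, one_mul, ← add_assoc, h, ih, add_zsmul, one_zsmul, add_assoc]
  | pred k ih =>
    have := h (n + (-k - 1) * p)
    rw [show n + (-k - 1) * p + p = n + -k * p by ring, ih] at this
    rw [eq_sub_of_add_eq this.symm, sub_zsmul, one_zsmul]
    abel

section ShiftEquivariant

variable {L : ℕ} {θ : ℤ → ℤ}

theorem intCast_injOn_range (hθ : ∀ n, θ (n + L) = θ n + L) (hinj : Injective θ) :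
    Set.InjOn (fun r : ℕ => (θ r : ZMod L)) (range L) := by
  intro r hr s hs hrs
  obtain ⟨k, hk⟩ := (ZMod.intCast_eq_intCast_iff_dvd_sub _ _ _).mp hrs
  have hsr : (s : ℤ) = r + k * L :=
    hinj (by rw [map_add_mul_of_map_add hθ, smul_eq_mul]; linarith)
  have hmod : r % L = s % L := by
    rw [← ZMod.natCast_eq_natCast_iff']
    simpa using congrArg (Int.cast : ℤ → ZMod L) hsr.symm
  rwa [Nat.mod_eq_of_lt (mem_range.mp hr), Nat.mod_eq_of_lt (mem_range.mp hs)] at hmod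

theorem image_intCast_range_eq_univ [NeZero L] (hθ : ∀ n, θ (n + L) = θ n + L)
    (hinj : Injective θ) : (range L).image (fun r : ℕ => (θ r : ZMod L)) = univ :=
  eq_of_subset_of_card_le (subset_univ _) (by
    rw [card_image_of_injOn (intCast_injOn_range hθ hinj), card_range, card_univ, ZMod.card])

theorem surjective_of_injective_of_map_add [NeZero L] (hθ : ∀ n, θ (n + L) = θ n + L)
    (hinj : Injective θ) : Surjective θ := by
  intro t
  obtain ⟨r, -, hr⟩ :=
    mem_image.mp ((image_intCast_range_eq_univ hθ hinj).symm ▸ mem_univ (t : ZMod L))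
  obtain ⟨k, hk⟩ := (ZMod.intCast_eq_intCast_iff_dvd_sub _ _ _).mp hr
  exact ⟨r + k * L, by rw [map_add_mul_of_map_add hθ, smul_eq_mul]; linarith⟩

theorem sum_range_intCast_eq_sum_univ [NeZero L] (hθ : ∀ n, θ (n + L) = θ n + L)
    (hinj : Injective θ) : ∑ r ∈ range L, (θ r : ZMod L) = ∑ x : ZMod L, x := by
  rw [← image_intCast_range_eq_univ hθ hinj, sum_image (intCast_injOn_range hθ hinj)]

theorem exists_isTheta_sub [NeZero L] (hθ : ∀ n, θ (n + L) = θ n + L) (hinj : Injective θ) :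
    ∃ d, IsTheta L (fun n => θ n - d) := by
  obtain ⟨d, hd⟩ : (L : ℤ) ∣ ∑ r ∈ range L, θ r - ∑ r ∈ range L, (r : ℤ) := by
    rw [← ZMod.intCast_zmod_eq_zero_iff_dvd]
    push_cast
    rw [sum_range_intCast_eq_sum_univ hθ hinj, sub_eq_zero]
    simpa using
      (sum_range_intCast_eq_sum_univ (L := L) (θ := id) (fun n => rfl) injective_id).symm
  have hbij : Bijective θ := ⟨hinj, surjective_of_injective_of_map_add hθ hinj⟩
  refine ⟨d, (Equiv.subRight d).bijective.comp hbij, fun n => by simp only [hθ]; ring, ?_⟩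
  rw [sum_sub_distrib, sum_const, card_range, nsmul_eq_mul]
  linarith

end ShiftEquivariant

theorem IsTheta.eq_of_lt_iff_lt {L : ℕ} [NeZero L] {θ θ' : ℤ → ℤ} (hθ : IsTheta L θ)
    (hθ' : IsTheta L θ') (h : ∀ a b, θ a < θ b ↔ θ' a < θ' b) : θ' = θ := by
  obtain ⟨k, hk⟩ := exists_eq_add_of_lt_iff_lt hθ.1 hθ'.1.2 h
  have hLk : (L : ℤ) * k = 0 := by
    have := hθ'.2.2
    simp only [hk, sum_add_distrib, sum_const, card_range, nsmul_eq_mul, hθ.2.2] at this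
    linarith
  have hk0 : k = 0 := (mul_eq_zero.mp hLk).resolve_left (Int.natCast_ne_zero.mpr (NeZero.ne L))
  funext n
  rw [hk, hk0, add_zero]

section Rank

variable {L : ℕ} {P : ℤ → ℝ} {c : ℝ}

noncomputable def residueRank (P : ℤ → ℝ) (c : ℝ) (n r : ℤ) : ℤ := ⌈(P n - P r) / c⌉

/-- Counts, residue class by residue class, the points `m` with `P m < P n`, up to a constant. -/
noncomputable def rank (L : ℕ) (P : ℤ → ℝ) (c : ℝ) (n : ℤ) : ℤ :=
  ∑ r ∈ Ico 0 (L : ℤ), residueRank P c n r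

variable (hP : ∀ n, P (n + L) = P n + c) (hc : 0 < c)
include hP hc

theorem residueRank_le_iff {n r k : ℤ} : residueRank P c n r ≤ k ↔ P n ≤ P (r + k * L) := by
  rw [residueRank, Int.ceil_le, div_le_iff₀ hc, map_add_mul_of_map_add hP, zsmul_eq_mul]
  constructor <;> intro <;> linarith

theorem residueRank_add (n r : ℤ) : residueRank P c (n + L) r = residueRank P c n r + 1 := by
  rw [residueRank, residueRank, hP, ← Int.ceil_add_one]
  congr 1
  field_simp
  ring

theorem rank_add (n : ℤ) : rank L P c (n + L) = rank L P c n + L := by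
  simp [rank, residueRank_add hP hc, sum_add_distrib]

theorem rank_lt_rank [NeZero L] {n n' : ℤ} (h : P n < P n') : rank L P c n < rank L P c n' := by
  have hL : (0 : ℤ) < L := by exact_mod_cast Nat.pos_of_ne_zero (NeZero.ne L)
  refine sum_lt_sum (fun r _ => ?_) ⟨n % L, ?_, ?_⟩
  · rw [residueRank_le_iff hP hc]
    exact h.le.trans ((residueRank_le_iff hP hc).mp le_rfl)
  · exact mem_Ico.mpr ⟨Int.emod_nonneg _ hL.ne', Int.emod_lt_of_pos _ hL⟩
  · have hn : n % L + n / L * L = n := Int.emod_add_ediv_mul n L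
    have hle : residueRank P c n (n % L) ≤ n / L := by rw [residueRank_le_iff hP hc, hn]
    have hgt : ¬ residueRank P c n' (n % L) ≤ n / L := by
      rw [residueRank_le_iff hP hc, hn]
      exact h.not_ge
    omega

end Rank

theorem existsUnique_isTheta {L : ℕ} [NeZero L] {P : ℤ → ℝ} {c : ℝ} (hinj : Injective P)
    (hP : ∀ n, P (n + L) = P n + c) (hc : 0 < c) :
    ∃! θ : ℤ → ℤ, IsTheta L θ ∧ ∀ n n', n < n' → (P n < P n' ↔ θ n < θ n') := by
  have hrank : ∀ n n', rank L P c n < rank L P c n' ↔ P n < P n' :=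
    lt_iff_lt_of_lt_imp_lt hinj fun _ _ => rank_lt_rank hP hc
  have hrank_inj : Injective (rank L P c) := fun a b hab => hinj <| le_antisymm
    (not_lt.mp fun h => ((hrank b a).2 h).ne' hab) (not_lt.mp fun h => ((hrank a b).2 h).ne hab)
  obtain ⟨d, hd⟩ := exists_isTheta_sub (rank_add hP hc) hrank_inj
  refine ⟨_, ⟨hd, fun n n' _ => by rw [sub_lt_sub_iff_right, hrank]⟩, ?_⟩
  rintro θ ⟨hθ, horder⟩
  have hθP : ∀ n n', θ n < θ n' ↔ P n < P n' :=
    lt_iff_lt_of_forall_lt_iff_lt hθ.1.1 hinj fun n n' h => (horder n n' h).symm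
  exact IsTheta.eq_of_lt_iff_lt hd hθ fun n n' => by rw [hθP, sub_lt_sub_iff_right, hrank]

theorem aroot_add {L : ℕ} {a b c : ℤ} (hab : a ≤ b) (hbc : b ≤ c) (i : ZMod L) :
    aroot L a b i + aroot L b c i = aroot L a c i := by
  unfold aroot
  rw [← Ioc_union_Ioc_eq_Ioc hab hbc, filter_union, card_union_of_disjoint]
  · push_cast; ring
  · exact disjoint_filter_filter (Ioc_disjoint_Ioc_of_le le_rfl)

theorem aroot_eq_zero {L : ℕ} {a b : ℤ} (h : b ≤ a) (i : ZMod L) : aroot L a b i = 0 := by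
  simp [aroot, Ioc_eq_empty_of_le h]

theorem aroot_self_add {L : ℕ} [NeZero L] (n : ℤ) (i : ZMod L) : aroot L n (n + L) i = 1 := by
  have hL : (0 : ℤ) < L := by exact_mod_cast Nat.pos_of_ne_zero (NeZero.ne L)
  obtain ⟨v, rfl⟩ := ZMod.intCast_surjective i
  simp only [aroot, ZMod.intCast_eq_intCast_iff]
  rw [Int.Ioc_filter_modEq_card _ _ hL]
  push_cast
  rw [add_sub_right_comm, add_div, div_self (Nat.cast_ne_zero.mpr (NeZero.ne L)),
    Int.floor_add_one]
  simp

section Potential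

variable {L : ℕ} [NeZero L] (ζ : ZMod L → ℝ)

noncomputable def potential (n : ℤ) : ℝ :=
  ∑ i : ZMod L, ζ i * ((aroot L n 0 i : ℝ) - aroot L 0 n i)

theorem potential_sub_potential {n n' : ℤ} (h : n ≤ n') :
    potential ζ n - potential ζ n' = ∑ i : ZMod L, ζ i * (aroot L n n' i : ℝ) := by
  rw [potential, potential, ← sum_sub_distrib]
  refine sum_congr rfl fun i _ => ?_
  rw [← mul_sub]
  congr 1
  rcases le_total 0 n with h0 | h0
  · rw [aroot_eq_zero h0, aroot_eq_zero (h0.trans h), ← aroot_add h0 h]; push_cast; ring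
  rcases le_total 0 n' with h1 | h1
  · rw [aroot_eq_zero h0, aroot_eq_zero h1, ← aroot_add h0 h1]; push_cast; ring
  · rw [aroot_eq_zero h0, aroot_eq_zero h1, ← aroot_add h h1]; push_cast; ring

theorem potential_add (n : ℤ) :
    potential ζ (n + L) = potential ζ n + -∑ i : ZMod L, ζ i := by
  have := potential_sub_potential ζ (le_add_of_nonneg_right (Int.natCast_nonneg L) : n ≤ n + L)
  simp only [aroot_self_add, Int.cast_one, mul_one] at this
  linarith

end Potential

end AffineChamber

open AffineChamber

/-- Fix a generic stability parameter `ζ ∈ ℝ^I` with `ζ·δ < 0`.  Then there is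
a unique `θ ∈ Θ` such that for all half-integers `h < h'`,
`α_{[h,h']}·ζ < 0 ⟺ θ(h) < θ(h')`: the chambers of the affine `A_{L−1}`
arrangement in the half-space `{ζ : ζ·δ < 0}` are in bijection with `Θ`. -/
theorem stmt16 (L : ℕ) [NeZero L] (ζ : ZMod L → ℝ)
    (hgen : ∀ n n' : ℤ, n < n' → (∑ i : ZMod L, ζ i * (aroot L n n' i : ℝ)) ≠ 0)
    (hδ : (∑ i : ZMod L, ζ i) < 0) :
    ∃! θ : ℤ → ℤ, IsTheta L θ ∧
      ∀ n n' : ℤ, n < n' →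
        ((∑ i : ZMod L, ζ i * (aroot L n n' i : ℝ)) < 0 ↔ θ n < θ n') := by
  have hinj : Injective (potential ζ) := Injective.of_lt_imp_ne fun n n' h => by
    rw [Ne, ← sub_eq_zero, potential_sub_potential ζ h.le]
    exact hgen n n' h
  have hroot : ∀ n n', n < n' →
      ((∑ i : ZMod L, ζ i * (aroot L n n' i : ℝ)) < 0 ↔ potential ζ n < potential ζ n') :=
    fun n n' h => by rw [← potential_sub_potential ζ h.le, sub_neg]
  simpa +contextual only [hroot] using
    existsUnique_isTheta hinj (potential_add ζ) (neg_pos.mpr hδ)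
end
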